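/- arXiv:2503.18184 — 4 statements merged into one kernel-verified Lean document; each statement's English description precedes it below -/
import Mathlib

section
/- For a finite quiver Q with no isolated vertices considered, the number of isolated vertices in the Kronecker square Q̂ equals 2·(number of sinks of Q)·(number of sources of Q), provided no vertex of Q is both a sink and a source. -/
structure Quiv where
  V : Type
  E : Type
  s : E → V
  r : E → V

namespace Quiv

def kron (Q Q' : Quiv) : Quiv :=
  ⟨Q.V × Q'.V, Q.E × Q'.E, fun e => (Q.s e.1, Q'.s e.2), fun e => (Q.r e.1, Q'.r e.2)⟩

def IsSink (Q : Quiv) (v : Q.V) : Prop := ∀ e, Q.s e ≠ v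

def IsSource (Q : Quiv) (v : Q.V) : Prop := ∀ e, Q.r e ≠ v

def Isolated (Q : Quiv) (v : Q.V) : Prop := Q.IsSink v ∧ Q.IsSource v

inductive Reach (Q : Quiv) : Q.V → Q.V → Prop
  | refl (v : Q.V) : Reach Q v v
  | step (e : Q.E) {v : Q.V} : Reach Q (Q.r e) v → Reach Q (Q.s e) v

inductive PathN (Q : Quiv) : ℕ → Q.V → Q.V → Prop
  | nil (v : Q.V) : PathN Q 0 v v
  | cons (e : Q.E) {n : ℕ} {v : Q.V} : PathN Q n (Q.r e) v → PathN Q (n + 1) (Q.s e) v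

def IsClosedPath (Q : Quiv) (l : List Q.E) : Prop :=
  l ≠ [] ∧ l.Chain' (fun e f => Q.r e = Q.s f) ∧
    l.getLast?.map Q.r = l.head?.map Q.s

def IsCycle (Q : Quiv) (l : List Q.E) : Prop :=
  Q.IsClosedPath l ∧ (l.map Q.s).Nodup

end Quiv


/-!
A pair `(u, v)` emits an arrow of the Kronecker product iff both `u` and `v` emit arrows, and
likewise for receiving. So `(u, v)` is isolated iff one coordinate is a sink and one is a source;
since no vertex is both, either `u` is a sink and `v` a source or the other way round, and these
two disjoint families of pairs are in bijection with each other.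
-/

theorem Set.ncard_union_eq_two_mul {α : Type*} {s t : Set α} (hst : Disjoint s t) (e : t ≃ s) :
    (s ∪ t).ncard = 2 * s.ncard := by
  classical
  rw [← Nat.card_coe_set_eq, ← Nat.card_coe_set_eq,
    Nat.card_congr ((Equiv.Set.union hst).trans <|
      (Equiv.sumCongr (Equiv.refl s) e).trans (Equiv.boolProdEquivSum s).symm),
    Nat.card_prod, Nat.card_eq_fintype_card, Fintype.card_bool]

theorem Set.ncard_prod_union_prod_swap {α : Type*} {s t : Set α} (hst : Disjoint s t) :
    (s ×ˢ t ∪ t ×ˢ s).ncard = 2 * (s.ncard * t.ncard) := by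
  rw [Set.ncard_union_eq_two_mul (Set.disjoint_prod.mpr (Or.inl hst))
    ((Equiv.Set.prod t s).trans <| (Equiv.prodComm t s).trans (Equiv.Set.prod s t).symm),
    Set.ncard_prod]

namespace Quiv

variable {Q Q' : Quiv}

theorem kron_isSink_iff {u : Q.V} {v : Q'.V} :
    (Q.kron Q').IsSink (u, v) ↔ Q.IsSink u ∨ Q'.IsSink v := by
  simp only [IsSink, kron, ne_eq, Prod.forall, Prod.mk.injEq, not_and]
  grind

theorem kron_isSource_iff {u : Q.V} {v : Q'.V} :
    (Q.kron Q').IsSource (u, v) ↔ Q.IsSource u ∨ Q'.IsSource v := by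
  simp only [IsSource, kron, ne_eq, Prod.forall, Prod.mk.injEq, not_and]
  grind

theorem kron_isolated_iff {u : Q.V} {v : Q'.V} :
    (Q.kron Q').Isolated (u, v) ↔
      (Q.IsSink u ∨ Q'.IsSink v) ∧ (Q.IsSource u ∨ Q'.IsSource v) :=
  and_congr kron_isSink_iff kron_isSource_iff

theorem setOf_kron_self_isolated (h : ∀ v : Q.V, ¬ (Q.IsSink v ∧ Q.IsSource v)) :
    {w : (Q.kron Q).V | (Q.kron Q).Isolated w} =
      {v | Q.IsSink v} ×ˢ {v | Q.IsSource v} ∪ {v | Q.IsSource v} ×ˢ {v | Q.IsSink v} := by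
  ext ⟨u, v⟩
  refine kron_isolated_iff.trans ?_
  show _ ↔ Q.IsSink u ∧ Q.IsSource v ∨ Q.IsSource u ∧ Q.IsSink v
  have hu := h u
  have hv := h v
  tauto

end Quiv

theorem kron_card_isolated_general (Q : Quiv)
    (h : ∀ v : Q.V, ¬ (Q.IsSink v ∧ Q.IsSource v)) :
    Set.ncard {w : (Q.kron Q).V | (Q.kron Q).Isolated w} =
      2 * (Set.ncard {v : Q.V | Q.IsSink v} * Set.ncard {v : Q.V | Q.IsSource v}) := by
  rw [Quiv.setOf_kron_self_isolated h]
  exact Set.ncard_prod_union_prod_swap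
    (Set.disjoint_left.mpr fun v hsink hsource ↦ h v ⟨hsink, hsource⟩)

/-- For a finite quiver in which no vertex is simultaneously a sink and a source, the
number of isolated vertices of the Kronecker square is twice the product of the number
of sinks and the number of sources. -/
theorem kron_card_isolated (Q : Quiv) [Fintype Q.V] [Fintype Q.E]
    (h : ∀ v : Q.V, ¬ (Q.IsSink v ∧ Q.IsSource v)) :
    Set.ncard {w : (Q.kron Q).V | (Q.kron Q).Isolated w} =
      2 * (Set.ncard {v : Q.V | Q.IsSink v} * Set.ncard {v : Q.V | Q.IsSource v}) :=
  kron_card_isolated_general Q h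
end

section
/- Let Q be a row-finite quiver and let H be the hereditary saturated closure of the set of line points of Q. If u is a line point of the quiver Q∖H, then there exists an arrow f with s(f) = u, r(f) ∉ H, and r(f) ≠ u. -/
namespace Quiv

def IsBifurcation (Q : Quiv) (v : Q.V) : Prop :=
  ∃ e f : Q.E, e ≠ f ∧ Q.s e = v ∧ Q.s f = v

/-- A line point: no vertex reachable from `u` is a bifurcation or lies on a closed path. -/
def IsLinePoint (Q : Quiv) (u : Q.V) : Prop :=
  ∀ w : Q.V, Q.Reach u w →
    ¬ Q.IsBifurcation w ∧ ¬ ∃ e : Q.E, Q.s e = w ∧ Q.Reach (Q.r e) w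

def Hereditary (Q : Quiv) (H : Set Q.V) : Prop := ∀ e : Q.E, Q.s e ∈ H → Q.r e ∈ H

def IsRegular (Q : Quiv) (v : Q.V) : Prop :=
  (∃ e : Q.E, Q.s e = v) ∧ {e : Q.E | Q.s e = v}.Finite

def Saturated (Q : Quiv) (H : Set Q.V) : Prop :=
  ∀ v : Q.V, Q.IsRegular v → (∀ e : Q.E, Q.s e = v → Q.r e ∈ H) → v ∈ H

/-- The hereditary saturated closure of a set of vertices. -/
def hsClosure (Q : Quiv) (X : Set Q.V) : Set Q.V :=
  ⋂₀ {H : Set Q.V | X ⊆ H ∧ Q.Hereditary H ∧ Q.Saturated H}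

/-- The quiver obtained by removing a set of vertices and all incident arrows. -/
def minus (Q : Quiv) (H : Set Q.V) : Quiv :=
  ⟨{v : Q.V // v ∉ H}, {e : Q.E // Q.s e ∉ H ∧ Q.r e ∉ H},
    fun e => ⟨Q.s e.1, e.2.1⟩, fun e => ⟨Q.r e.1, e.2.2⟩⟩

def RowFinite (Q : Quiv) : Prop := ∀ v : Q.V, {e : Q.E | Q.s e = v}.Finite

end Quiv

/-! A line point `u` of `Q ∖ H` carries no loop, so if every arrow leaving `u` ended in `H`,
then `u` would be a sink of `Q` (hence a line point of `Q`) or a regular vertex all of whose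
arrows end in the saturated set `H`; either way `u ∈ H`. -/

namespace Quiv

variable {Q : Quiv}

theorem subset_hsClosure (X : Set Q.V) : X ⊆ Q.hsClosure X :=
  fun _ hx _ hK => hK.1 hx

theorem saturated_hsClosure (X : Set Q.V) : Q.Saturated (Q.hsClosure X) :=
  fun v hreg hr _ hK => hK.2.2 v hreg fun e he => hr e he _ hK

theorem isLinePoint_of_isSink {u : Q.V} (hu : Q.IsSink u) : Q.IsLinePoint u := by
  intro w hw
  cases hw with
  | refl => exact ⟨fun ⟨e, _, _, he, _⟩ => hu e he, fun ⟨e, he, _⟩ => hu e he⟩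
  | step e _ => exact absurd rfl (hu e)

theorem IsLinePoint.r_ne_of_s_eq {u : Q.V} (hl : Q.IsLinePoint u) {e : Q.E} (he : Q.s e = u) :
    Q.r e ≠ u := fun hr =>
  (hl u (Reach.refl u)).2 ⟨e, he, hr ▸ Reach.refl _⟩

theorem IsLinePoint.r_ne_of_s_eq_of_minus {H : Set Q.V} {u : Q.V} {hu : u ∉ H}
    (hl : (Q.minus H).IsLinePoint ⟨u, hu⟩) {e : Q.E} (he : Q.s e = u) : Q.r e ≠ u := by
  intro hr
  have hs : Q.s e ∉ H := he ▸ hu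
  have hr' : Q.r e ∉ H := hr ▸ hu
  exact hl.r_ne_of_s_eq (e := ⟨e, hs, hr'⟩) (Subtype.ext he) (Subtype.ext hr)

theorem mem_hsClosure_of_forall_r_mem (hrow : Q.RowFinite) {X : Set Q.V}
    (hsinks : ∀ v, Q.IsSink v → v ∈ X) {u : Q.V}
    (hu : ∀ e : Q.E, Q.s e = u → Q.r e ∈ Q.hsClosure X) : u ∈ Q.hsClosure X := by
  by_cases hsink : Q.IsSink u
  · exact subset_hsClosure X (hsinks u hsink)
  · have hemits : ∃ e : Q.E, Q.s e = u := by simpa [IsSink] using hsink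
    exact saturated_hsClosure X u ⟨hemits, hrow u⟩ hu

end Quiv

/-- If `u` is a line point of `Q ∖ H`, where `H` is the hereditary saturated closure of
the line points of a row-finite quiver `Q`, then there is an arrow `f` with source `u`,
range outside `H`, and range different from `u`. -/
theorem linePoint_of_minus_has_exit_arrow (Q : Quiv) (hrow : Q.RowFinite)
    (H : Set Q.V) (hH : H = Q.hsClosure {v : Q.V | Q.IsLinePoint v})
    (u : Q.V) (hu : u ∉ H)
    (hl : (Q.minus H).IsLinePoint ⟨u, hu⟩) :
    ∃ f : Q.E, Q.s f = u ∧ Q.r f ∉ H ∧ Q.r f ≠ u := by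
  by_contra! hcon
  have hall : ∀ f : Q.E, Q.s f = u → Q.r f ∈ H := fun f hs => by
    by_contra hr
    exact hl.r_ne_of_s_eq_of_minus hs (hcon f hs hr)
  subst hH
  exact hu (Quiv.mem_hsClosure_of_forall_r_mem hrow (fun _ => Quiv.isLinePoint_of_isSink) hall)
end

section
/- In a quiver Q, any two distinct cycles have no common vertex if and only if any two distinct cycles in the Kronecker square Q̂ have no common vertex. -/
namespace Quiv

/-- Two cycles are the same cyclic sequence of arrows when one is a rotation of the other. -/
def RotEquiv {Q : Quiv} (c c' : List Q.E) : Prop := ∃ n : ℕ, c' = c.rotate n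

/-- No two distinct cycles share a vertex. -/
def NoCommonVertexCycles (Q : Quiv) : Prop :=
  ∀ c c' : List Q.E, Q.IsCycle c → Q.IsCycle c' → ¬ RotEquiv c c' →
    ∀ v : Q.V, v ∈ c.map Q.s → v ∉ c'.map Q.s

/-- There is a chain of `k` pairwise distinct cycles `c₁ ⇒ ⋯ ⇒ c_k`, where `cᵢ ⇒ c_{i+1}`
means there is a path from a vertex of `cᵢ` to a vertex of `c_{i+1}`. -/
def HasCycleChain (Q : Quiv) (k : ℕ) : Prop :=
  ∃ c : Fin k → List Q.E,
    (∀ i, Q.IsCycle (c i)) ∧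
    (∀ i j, i ≠ j → ¬ RotEquiv (c i) (c j)) ∧
    ∀ i j : Fin k, (j : ℕ) = (i : ℕ) + 1 →
      ∃ v ∈ (c i).map Q.s, ∃ w ∈ (c j).map Q.s, Q.Reach v w

end Quiv

/-! Both sides are equivalent to asking that at every vertex at most one arrow lies on a closed
path. A closed path through an arrow `e` can be cut at repeated vertices down to a cycle through
`e`, so two such arrows with a common source lie on cycles sharing a vertex. Conversely, once every
arrow on a closed path is determined by its source, a cycle is determined by any one of its arrows
up to rotation. This arrow condition passes to `Q.kron Q'` because closed paths there project to
closed paths in both factors, and it comes back from `Q.kron Q` along the diagonal `e ↦ (e, e)`. -/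

namespace List

variable {α β : Type*}

theorem exists_eq_append_cons_append_cons_of_not_nodup_map {f : α → β} {l : List α}
    (h : ¬(l.map f).Nodup) :
    ∃ A x B y C, l = A ++ x :: (B ++ y :: C) ∧ f x = f y := by
  induction l with
  | nil => simp at h
  | cons a l ih =>
    rw [map_cons, nodup_cons, Classical.not_and_iff_not_or_not, not_not] at h
    rcases h with h | h
    · obtain ⟨y, hy, hya⟩ := mem_map.mp h
      obtain ⟨B, C, rfl⟩ := append_of_mem hy
      exact ⟨[], a, B, y, C, rfl, hya.symm⟩
    · obtain ⟨A, x, B, y, C, rfl, hxy⟩ := ih h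
      exact ⟨a :: A, x, B, y, C, rfl, hxy⟩

theorem exists_isRotated_cons_of_mem {l : List α} {a : α} (h : a ∈ l) : ∃ t, l ~r a :: t := by
  obtain ⟨s, t, rfl⟩ := append_of_mem h
  exact ⟨t ++ s, by simpa using isRotated_append (l := s) (l' := a :: t)⟩

theorem eq_of_isChain_cons_append_singleton {R : α → α → Prop} {a b : α} {l l' : List α}
    (hR : ∀ x y z, y ∈ l ++ [b] → z ∈ l' ++ [b] → R x y → R x z → y = z)
    (h : IsChain R (a :: (l ++ [b]))) (h' : IsChain R (a :: (l' ++ [b])))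
    (hb : b ∉ l) (hb' : b ∉ l') : l = l' := by
  induction l generalizing a l' with
  | nil =>
    cases l' with
    | nil => rfl
    | cons z l' =>
      have := hR a b z (by simp) (by simp) (isChain_pair.mp h) (isChain_cons_cons.mp h').1
      simp [this] at hb'
  | cons y l ih =>
    cases l' with
    | nil =>
      have := hR a y b (by simp) (by simp) (isChain_cons_cons.mp h).1 (isChain_pair.mp h')
      simp [this] at hb
    | cons z l' =>
      rw [cons_append, isChain_cons_cons] at h h'
      obtain rfl := hR a y z (by simp) (by simp) h.1 h'.1
      rw [ih (fun x u w hu hw => hR x u w (mem_cons_of_mem _ hu) (mem_cons_of_mem _ hw)) h.2 h'.2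
        (fun hm => hb (mem_cons_of_mem _ hm)) (fun hm => hb' (mem_cons_of_mem _ hm))]

end List

namespace Quiv

variable {Q Q' : Quiv}

def Composable (Q : Quiv) (e f : Q.E) : Prop := Q.r e = Q.s f

theorem composable_congr_right {e f f' : Q.E} (h : Q.s f = Q.s f') :
    Q.Composable e f ↔ Q.Composable e f' := by
  rw [Composable, Composable, h]

theorem isClosedPath_cons_iff {e : Q.E} {l : List Q.E} :
    Q.IsClosedPath (e :: l) ↔ (e :: (l ++ [e])).IsChain Q.Composable := by
  obtain ⟨x, hx⟩ : ∃ x, (e :: l).getLast? = some x := Option.isSome_iff_exists.mp (by simp)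
  rw [← List.cons_append, List.isChain_append, IsClosedPath, hx]
  simp only [Option.mem_def, Option.some.injEq, forall_eq', List.head?_cons, Option.map_some]
  exact ⟨fun ⟨_, hc, hl⟩ => ⟨hc, .singleton _, hl⟩, fun ⟨hc, _, hl⟩ => ⟨List.cons_ne_nil _ _, hc, hl⟩⟩

theorem isClosedPath_iff_chain {l : List Q.E} :
    Q.IsClosedPath l ↔ l ≠ [] ∧ (l : Cycle Q.E).Chain Q.Composable := by
  cases l with
  | nil => simp [IsClosedPath]
  | cons e l => simp [isClosedPath_cons_iff]

theorem IsClosedPath.of_isRotated {l l' : List Q.E} (h : Q.IsClosedPath l) (hr : l ~r l') :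
    Q.IsClosedPath l' := by
  rw [isClosedPath_iff_chain] at h ⊢
  exact ⟨fun h' => h.1 (List.isRotated_nil_iff.mp (h' ▸ hr)), Cycle.coe_eq_coe.mpr hr ▸ h.2⟩

theorem IsCycle.of_isRotated {l l' : List Q.E} (h : Q.IsCycle l) (hr : l ~r l') :
    Q.IsCycle l' :=
  ⟨h.1.of_isRotated hr, (hr.map Q.s).nodup_iff.mp h.2⟩

theorem isChain_composable_append_singleton_congr {l : List Q.E} {f f' : Q.E}
    (h : Q.s f = Q.s f') :
    (l ++ [f]).IsChain Q.Composable ↔ (l ++ [f']).IsChain Q.Composable := by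
  simp only [List.isChain_append, List.isChain_singleton, List.head?_cons, Option.mem_def,
    Option.some.injEq, forall_eq', composable_congr_right h]

theorem IsClosedPath.cons_of_source_eq {x y : Q.E} {l l' : List Q.E}
    (h : Q.IsClosedPath (x :: (l ++ y :: l'))) (hxy : Q.s x = Q.s y) :
    Q.IsClosedPath (x :: l) := by
  rw [isClosedPath_cons_iff, List.append_assoc, List.cons_append, List.isChain_cons_split] at h
  rw [isClosedPath_cons_iff, ← List.cons_append, isChain_composable_append_singleton_congr hxy,
    List.cons_append]
  exact h.1

theorem IsClosedPath.exists_shorter {l : List Q.E} (h : Q.IsClosedPath l)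
    (hd : ¬(l.map Q.s).Nodup) {e : Q.E} (he : e ∈ l) :
    ∃ l', Q.IsClosedPath l' ∧ e ∈ l' ∧ l'.length < l.length := by
  obtain ⟨A, x, B, y, C, rfl, hxy⟩ := List.exists_eq_append_cons_append_cons_of_not_nodup_map hd
  have hx : Q.IsClosedPath (x :: B) :=
    (h.of_isRotated (by simpa using List.isRotated_append (l := A) (l' := x :: (B ++ y :: C))))
      |>.cons_of_source_eq hxy
  have hy : Q.IsClosedPath (y :: (C ++ A)) :=
    (h.of_isRotated (by simpa using List.isRotated_append (l := A ++ x :: B) (l' := y :: C)))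
      |>.cons_of_source_eq hxy.symm
  simp only [List.mem_append, List.mem_cons] at he
  by_cases heB : e = x ∨ e ∈ B
  · exact ⟨x :: B, hx, by simpa using heB, by simp; omega⟩
  · exact ⟨y :: (C ++ A), hy, by simp; tauto, by simp; omega⟩

def cyclicArrows (Q : Quiv) : Set Q.E := {e | ∃ l, Q.IsClosedPath l ∧ e ∈ l}

theorem exists_isCycle_of_mem_cyclicArrows {e : Q.E} (he : e ∈ Q.cyclicArrows) :
    ∃ c, Q.IsCycle c ∧ e ∈ c := by
  obtain ⟨l, hl, hel⟩ := he
  induction hn : l.length using Nat.strong_induction_on generalizing l with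
  | _ n ih =>
    by_cases hd : (l.map Q.s).Nodup
    · exact ⟨l, ⟨hl, hd⟩, hel⟩
    · obtain ⟨l', hl', hel', hlt⟩ := hl.exists_shorter hd hel
      exact ih _ (hn ▸ hlt) l' hl' hel' rfl

theorem IsCycle.mem_cyclicArrows {c : List Q.E} (hc : Q.IsCycle c) {e : Q.E} (he : e ∈ c) :
    e ∈ Q.cyclicArrows :=
  ⟨c, hc.1, he⟩

theorem NoCommonVertexCycles.injOn_cyclicArrows (h : Q.NoCommonVertexCycles) :
    Set.InjOn Q.s Q.cyclicArrows := by
  intro e he e' he' hs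
  obtain ⟨c, hc, hec⟩ := exists_isCycle_of_mem_cyclicArrows he
  obtain ⟨c', hc', hec'⟩ := exists_isCycle_of_mem_cyclicArrows he'
  have hrot : RotEquiv c c' := by
    by_contra hne
    exact h c c' hc hc' hne (Q.s e) (List.mem_map_of_mem hec) (hs ▸ List.mem_map_of_mem hec')
  obtain ⟨n, rfl⟩ := hrot
  exact List.inj_on_of_nodup_map hc.2 hec (List.mem_rotate.mp hec') hs

theorem IsCycle.tail_eq_of_injOn {e : Q.E} {l l' : List Q.E} (hinj : Set.InjOn Q.s Q.cyclicArrows)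
    (h : Q.IsCycle (e :: l)) (h' : Q.IsCycle (e :: l')) : l = l' := by
  have hmem {c : List Q.E} (hc : Q.IsCycle (e :: c)) {f : Q.E} (hf : f ∈ c ++ [e]) :
      f ∈ Q.cyclicArrows :=
    hc.mem_cyclicArrows (by simp at hf ⊢; tauto)
  have hnotin {c : List Q.E} (hc : Q.IsCycle (e :: c)) : e ∉ c :=
    (List.nodup_cons.mp (List.Nodup.of_map Q.s hc.2)).1
  refine List.eq_of_isChain_cons_append_singleton (R := Q.Composable) ?_
    (isClosedPath_cons_iff.mp h.1) (isClosedPath_cons_iff.mp h'.1) (hnotin h) (hnotin h')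
  intro x y z hy hz hxy hxz
  exact hinj (hmem h hy) (hmem h' hz) (hxy.symm.trans hxz)

theorem noCommonVertexCycles_of_injOn_cyclicArrows (h : Set.InjOn Q.s Q.cyclicArrows) :
    Q.NoCommonVertexCycles := by
  intro c c' hc hc' hne v hv hv'
  obtain ⟨e, hec, rfl⟩ := List.mem_map.mp hv
  obtain ⟨e', hec', hs⟩ := List.mem_map.mp hv'
  obtain rfl := h (hc'.mem_cyclicArrows hec') (hc.mem_cyclicArrows hec) hs
  obtain ⟨t, ht⟩ := List.exists_isRotated_cons_of_mem hec
  obtain ⟨t', ht'⟩ := List.exists_isRotated_cons_of_mem hec'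
  obtain rfl := (hc.of_isRotated ht).tail_eq_of_injOn h (hc'.of_isRotated ht')
  obtain ⟨n, hn⟩ := ht.trans ht'.symm
  exact hne ⟨n, hn.symm⟩

theorem noCommonVertexCycles_iff_injOn_cyclicArrows :
    Q.NoCommonVertexCycles ↔ Set.InjOn Q.s Q.cyclicArrows :=
  ⟨NoCommonVertexCycles.injOn_cyclicArrows, noCommonVertexCycles_of_injOn_cyclicArrows⟩

theorem IsClosedPath.map {f : Q.E → Q'.E}
    (hf : ∀ e e', Q.Composable e e' → Q'.Composable (f e) (f e')) {l : List Q.E}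
    (h : Q.IsClosedPath l) : Q'.IsClosedPath (l.map f) := by
  rw [isClosedPath_iff_chain] at h ⊢
  refine ⟨List.map_eq_nil_iff.not.mpr h.1, ?_⟩
  rw [← Cycle.map_coe, Cycle.chain_map]
  exact h.2.imp hf

theorem mem_cyclicArrows_map {f : Q.E → Q'.E}
    (hf : ∀ e e', Q.Composable e e' → Q'.Composable (f e) (f e')) {e : Q.E}
    (he : e ∈ Q.cyclicArrows) : f e ∈ Q'.cyclicArrows :=
  let ⟨l, hl, hel⟩ := he
  ⟨l.map f, hl.map hf, List.mem_map_of_mem hel⟩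

theorem Composable.kron_fst {e f : (Q.kron Q').E} (h : (Q.kron Q').Composable e f) :
    Q.Composable e.1 f.1 :=
  congrArg Prod.fst h

theorem Composable.kron_snd {e f : (Q.kron Q').E} (h : (Q.kron Q').Composable e f) :
    Q'.Composable e.2 f.2 :=
  congrArg Prod.snd h

theorem Composable.diag {e f : Q.E} (h : Q.Composable e f) :
    (Q.kron Q).Composable (e, e) (f, f) :=
  Prod.ext h h

theorem kron_cyclicArrows_subset :
    (Q.kron Q').cyclicArrows ⊆ Q.cyclicArrows ×ˢ Q'.cyclicArrows := fun _ he =>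
  ⟨mem_cyclicArrows_map (fun _ _ => Composable.kron_fst) he,
    mem_cyclicArrows_map (fun _ _ => Composable.kron_snd) he⟩

theorem injOn_kron_cyclicArrows (h : Set.InjOn Q.s Q.cyclicArrows)
    (h' : Set.InjOn Q'.s Q'.cyclicArrows) :
    Set.InjOn (Q.kron Q').s (Q.kron Q').cyclicArrows :=
  (h.prodMap h').mono kron_cyclicArrows_subset

theorem diag_mem_kron_cyclicArrows {e : Q.E} (he : e ∈ Q.cyclicArrows) :
    ((e, e) : (Q.kron Q).E) ∈ (Q.kron Q).cyclicArrows :=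
  mem_cyclicArrows_map (Q' := Q.kron Q) (f := fun e => (e, e)) (fun _ _ => Composable.diag) he

theorem injOn_cyclicArrows_of_kron_self (h : Set.InjOn (Q.kron Q).s (Q.kron Q).cyclicArrows) :
    Set.InjOn Q.s Q.cyclicArrows := fun _ he _ he' hs =>
  congrArg Prod.fst <| h (diag_mem_kron_cyclicArrows he) (diag_mem_kron_cyclicArrows he')
    (Prod.ext hs hs)

end Quiv

/-- In `Q` any two distinct cycles have no common vertex iff the same holds in the
Kronecker square. -/
theorem kron_noCommonVertexCycles_iff (Q : Quiv) :
    Q.NoCommonVertexCycles ↔ (Q.kron Q).NoCommonVertexCycles := by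
  rw [Quiv.noCommonVertexCycles_iff_injOn_cyclicArrows,
    Quiv.noCommonVertexCycles_iff_injOn_cyclicArrows]
  exact ⟨fun h => Quiv.injOn_kron_cyclicArrows h h, Quiv.injOn_cyclicArrows_of_kron_self⟩
end

section
/- A quiver Q satisfies Condition (K) if and only if its Kronecker square Q̂ satisfies Condition (K). -/
namespace Quiv

/-- A simple closed path based at `v`: a nonempty closed path starting and ending at `v`
that does not visit `v` in between. -/
def SimpleClosedAt (Q : Quiv) (v : Q.V) (l : List Q.E) : Prop :=
  l ≠ [] ∧ l.Chain' (fun e f => Q.r e = Q.s f) ∧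
    l.head?.map Q.s = some v ∧ l.getLast?.map Q.r = some v ∧
    v ∉ l.tail.map Q.s

/-- Condition (K): every vertex on a simple closed path is the base of at least two
different simple closed paths. -/
def ConditionK (Q : Quiv) : Prop :=
  ∀ (v : Q.V) (l : List Q.E), Q.SimpleClosedAt v l →
    ∃ l' : List Q.E, l' ≠ l ∧ Q.SimpleClosedAt v l'

end Quiv

/-! A simple closed path at `(v, w)` in the Kronecker square projects to closed paths at `v` and
at `w`, whose first returns are simple closed paths `c₁` and `c₂`. In the other direction, simple
closed paths `a` at `v` and `b` at `w`, traversed periodically and in parallel, first return to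
`(v, w)` together after `lcm |a| |b|` steps; this gives a simple closed path in `Q̂` having `a`
and `b` as prefixes of its projections. Combining `c₂` with two different simple closed paths at
`v` gives two different simple closed paths at `(v, w)`. Conversely, condition (K) at the diagonal
path of `l` yields another simple closed path at `(v, v)`; if both of its projections first
returned along `l`, the diagonal would be a prefix of it, hence equal to it.
-/

theorem List.range_prefix_of_le {m n : ℕ} (h : m ≤ n) : List.range m <+: List.range n := by
  obtain ⟨k, rfl⟩ := Nat.exists_eq_add_of_le h
  rw [List.range_add]
  exact List.prefix_append _ _

theorem List.prefix_of_map_fst_of_map_snd {α β : Type*} {x y : List (α × β)}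
    (h₁ : x.map Prod.fst <+: y.map Prod.fst) (h₂ : x.map Prod.snd <+: y.map Prod.snd) :
    x <+: y := by
  obtain ⟨hlen, hfst⟩ := List.prefix_iff_getElem.mp h₁
  obtain ⟨_, hsnd⟩ := List.prefix_iff_getElem.mp h₂
  simp only [List.length_map, List.getElem_map] at hlen hfst hsnd
  exact List.prefix_iff_getElem.mpr ⟨hlen, fun i hi => Prod.ext (hfst i hi) (hsnd i hi)⟩

namespace Quiv

variable {Q Q' : Quiv}

def IsClosedWalkAt (Q : Quiv) (v : Q.V) (l : List Q.E) : Prop :=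
  l ≠ [] ∧ l.IsChain (fun e f => Q.r e = Q.s f) ∧
    l.head?.map Q.s = some v ∧ l.getLast?.map Q.r = some v

theorem simpleClosedAt_iff {v : Q.V} {l : List Q.E} :
    Q.SimpleClosedAt v l ↔ Q.IsClosedWalkAt v l ∧ v ∉ l.tail.map Q.s :=
  ⟨fun ⟨hne, hchain, hhead, hlast, hv⟩ => ⟨⟨hne, hchain, hhead, hlast⟩, hv⟩,
    fun ⟨⟨hne, hchain, hhead, hlast⟩, hv⟩ => ⟨hne, hchain, hhead, hlast, hv⟩⟩

theorem SimpleClosedAt.isClosedWalkAt {v : Q.V} {l : List Q.E} (h : Q.SimpleClosedAt v l) :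
    Q.IsClosedWalkAt v l :=
  (simpleClosedAt_iff.mp h).1

theorem SimpleClosedAt.length_pos {v : Q.V} {l : List Q.E} (h : Q.SimpleClosedAt v l) :
    0 < l.length :=
  List.length_pos_iff.mpr h.1

theorem IsClosedWalkAt.map {v : Q.V} {l : List Q.E} (φ : Q.E → Q'.E) (ψ : Q.V → Q'.V)
    (hs : ∀ e, Q'.s (φ e) = ψ (Q.s e)) (hr : ∀ e, Q'.r (φ e) = ψ (Q.r e))
    (h : Q.IsClosedWalkAt v l) : Q'.IsClosedWalkAt (ψ v) (l.map φ) := by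
  obtain ⟨hne, hchain, hhead, hlast⟩ := h
  refine ⟨by simpa using hne, List.isChain_map _ |>.mpr (hchain.imp ?_), ?_, ?_⟩
  · intro e f hef
    rw [hr, hs, hef]
  · rw [List.head?_map, Option.map_map, show Q'.s ∘ φ = ψ ∘ Q.s from funext hs,
      ← Option.map_map, hhead, Option.map_some]
  · rw [List.getLast?_map, Option.map_map, show Q'.r ∘ φ = ψ ∘ Q.r from funext hr,
      ← Option.map_map, hlast, Option.map_some]

theorem IsClosedWalkAt.map_fst {v : Q.V} {w : Q'.V} {l : List (Q.kron Q').E}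
    (h : (Q.kron Q').IsClosedWalkAt (v, w) l) : Q.IsClosedWalkAt v (l.map Prod.fst) :=
  h.map (Q' := Q) Prod.fst Prod.fst (fun _ => rfl) (fun _ => rfl)

theorem IsClosedWalkAt.map_snd {v : Q.V} {w : Q'.V} {l : List (Q.kron Q').E}
    (h : (Q.kron Q').IsClosedWalkAt (v, w) l) : Q'.IsClosedWalkAt w (l.map Prod.snd) :=
  h.map (Q' := Q') Prod.snd Prod.snd (fun _ => rfl) (fun _ => rfl)

theorem IsClosedWalkAt.exists_shorter_prefix {v : Q.V} {p : List Q.E}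
    (h : Q.IsClosedWalkAt v p) (hv : v ∈ p.tail.map Q.s) :
    ∃ q, q <+: p ∧ q.length < p.length ∧ Q.IsClosedWalkAt v q := by
  obtain ⟨hne, hchain, hhead, -⟩ := h
  obtain ⟨e, t, rfl⟩ := List.exists_cons_of_ne_nil hne
  obtain ⟨f, hft, hfv⟩ := List.mem_map.mp hv
  obtain ⟨x, y, rfl⟩ := List.mem_iff_append.mp hft
  rw [← List.cons_append, List.isChain_append] at hchain
  obtain ⟨hchain, -, hjoin⟩ := hchain
  have hlast : (e :: x).getLast?.map Q.r = some v := by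
    obtain ⟨g, hg⟩ := Option.isSome_iff_exists.mp (List.getLast?_isSome.mpr (List.cons_ne_nil e x))
    rw [hg, Option.map_some, hjoin g hg f rfl, hfv]
  exact ⟨e :: x, List.prefix_append _ _, by simp, List.cons_ne_nil e x, hchain, hhead, hlast⟩

theorem IsClosedWalkAt.exists_simpleClosedAt_prefix {v : Q.V} {p : List Q.E}
    (h : Q.IsClosedWalkAt v p) : ∃ c, c <+: p ∧ Q.SimpleClosedAt v c := by
  induction hn : p.length using Nat.strong_induction_on generalizing p with
  | _ n ih =>
    by_cases hv : v ∈ p.tail.map Q.s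
    · obtain ⟨q, hqp, hlen, hq⟩ := h.exists_shorter_prefix hv
      obtain ⟨c, hcq, hc⟩ := ih _ (hn ▸ hlen) hq rfl
      exact ⟨c, hcq.trans hqp, hc⟩
    · exact ⟨p, List.prefix_rfl, simpleClosedAt_iff.mpr ⟨h, hv⟩⟩

theorem SimpleClosedAt.eq_of_prefix {v : Q.V} {c l : List Q.E} (hc : Q.SimpleClosedAt v c)
    (hl : Q.SimpleClosedAt v l) (hcl : c <+: l) : c = l := by
  obtain ⟨t, rfl⟩ := hcl
  obtain ⟨hne, -, -, hlast, -⟩ := hc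
  obtain ⟨-, hchain, -, -, hv⟩ := hl
  cases t with
  | nil => exact (List.append_nil c).symm
  | cons e t =>
    obtain ⟨g, hg⟩ := Option.isSome_iff_exists.mp (List.getLast?_isSome.mpr hne)
    have hev : Q.s e = v := by
      rw [← (List.isChain_append.mp hchain).2.2 g hg e rfl]
      simpa [hg] using hlast
    exact (hv (List.mem_map.mpr ⟨e, by simp [List.tail_append_of_ne_nil hne], hev⟩)).elim

theorem SimpleClosedAt.eq_of_prefix_of_prefix {v : Q.V} {a b p : List Q.E}
    (ha : Q.SimpleClosedAt v a) (hb : Q.SimpleClosedAt v b) (hap : a <+: p) (hbp : b <+: p) :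
    a = b := by
  rcases le_total a.length b.length with hab | hba
  · exact ha.eq_of_prefix hb (List.prefix_of_prefix_length_le hap hbp hab)
  · exact (hb.eq_of_prefix ha (List.prefix_of_prefix_length_le hbp hap hba)).symm

/-- `f` is the periodic unrolling of a simple closed path of length `n` based at `v`. -/
def IsCyclicWalk (Q : Quiv) (v : Q.V) (n : ℕ) (f : ℕ → Q.E) : Prop :=
  (∀ i, Q.r (f i) = Q.s (f (i + 1))) ∧ ∀ i, Q.s (f i) = v ↔ n ∣ i

theorem IsCyclicWalk.simpleClosedAt {v : Q.V} {n : ℕ} {f : ℕ → Q.E}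
    (hf : Q.IsCyclicWalk v n f) (hn : 0 < n) : Q.SimpleClosedAt v ((List.range n).map f) := by
  obtain ⟨hchain, hv⟩ := hf
  obtain ⟨k, rfl⟩ : ∃ k, n = k + 1 := Nat.exists_eq_succ_of_ne_zero hn.ne'
  refine ⟨by simp, ?_, ?_, ?_, ?_⟩
  · exact List.isChain_map _ |>.mpr <| (List.isChain_range_succ _ _).mpr fun i _ => hchain i
  · simp [List.range_succ_eq_map, (hv 0).mpr (dvd_zero _)]
  · simp [List.getLast?_range, hchain k, (hv (k + 1)).mpr dvd_rfl]
  · simp only [List.range_succ_eq_map, List.map_cons, List.tail_cons, List.map_map,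
      List.mem_map, List.mem_range, Function.comp_apply, hv, not_exists, not_and]
    intro i hi hdvd
    exact absurd (Nat.le_of_dvd i.succ_pos hdvd) (by omega)

theorem IsCyclicWalk.kron {v : Q.V} {w : Q'.V} {m n : ℕ} {f : ℕ → Q.E} {g : ℕ → Q'.E}
    (hf : Q.IsCyclicWalk v m f) (hg : Q'.IsCyclicWalk w n g) :
    (Q.kron Q').IsCyclicWalk (v, w) (m.lcm n) (fun i => (f i, g i)) :=
  ⟨fun i => Prod.ext (hf.1 i) (hg.1 i), fun i => by
    rw [Nat.lcm_dvd_iff, ← hf.2, ← hg.2]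
    exact Prod.ext_iff⟩

theorem SimpleClosedAt.exists_isCyclicWalk {v : Q.V} {l : List Q.E} (h : Q.SimpleClosedAt v l) :
    ∃ f, Q.IsCyclicWalk v l.length f ∧ (List.range l.length).map f = l := by
  obtain ⟨hne, hchain, hhead, hlast, hv⟩ := h
  have hm : 0 < l.length := List.length_pos_iff.mpr hne
  rw [List.head?_eq_getElem?, List.getElem?_eq_getElem hm, Option.map_some,
    Option.some_inj] at hhead
  rw [List.getLast?_eq_getElem?, List.getElem?_eq_getElem (by omega), Option.map_some,
    Option.some_inj] at hlast
  have hstep := List.isChain_iff_getElem.mp hchain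
  set m := l.length with hm_def
  refine ⟨fun i => l[i % m]'(Nat.mod_lt _ hm), ⟨fun i => ?_, fun i => ?_⟩, ?_⟩
  · have hsucc : (i + 1) % m = (i % m + 1) % m := (Nat.mod_add_mod i m 1).symm
    by_cases hi : i % m + 1 < m
    · simp only [hsucc, Nat.mod_eq_of_lt hi]
      exact hstep _ hi
    · have hwrap : i % m = m - 1 := by have := Nat.mod_lt i hm; omega
      simp only [hsucc, hwrap, Nat.sub_add_cancel hm, Nat.mod_self]
      rw [hlast, hhead]
  · rw [Nat.dvd_iff_mod_eq_zero]
    by_cases hi : i % m = 0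
    · simpa only [hi, iff_true] using hhead
    · refine iff_of_false (fun hsv => hv (List.mem_map.mpr ⟨_, ?_, hsv⟩)) hi
      rw [List.mem_iff_getElem]
      have hi' : i % m - 1 < l.tail.length := by
        have := Nat.mod_lt i hm
        simp only [List.length_tail]
        omega
      exact ⟨i % m - 1, hi', by simp [Nat.sub_add_cancel (Nat.pos_of_ne_zero hi)]⟩
  · exact List.ext_getElem (by simp [hm_def]) fun i hi _ => by
      simp [Nat.mod_eq_of_lt (by simpa using hi)]

theorem SimpleClosedAt.exists_kron {v : Q.V} {w : Q'.V} {a : List Q.E} {b : List Q'.E}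
    (ha : Q.SimpleClosedAt v a) (hb : Q'.SimpleClosedAt w b) :
    ∃ p : List (Q.E × Q'.E), (Q.kron Q').SimpleClosedAt (v, w) p ∧
      p.length = a.length.lcm b.length ∧ a <+: p.map Prod.fst ∧ b <+: p.map Prod.snd := by
  obtain ⟨f, hf, hfa⟩ := ha.exists_isCyclicWalk
  obtain ⟨g, hg, hgb⟩ := hb.exists_isCyclicWalk
  have hL : 0 < a.length.lcm b.length := Nat.lcm_pos ha.length_pos hb.length_pos
  refine ⟨(List.range (a.length.lcm b.length)).map fun i => (f i, g i),
    (hf.kron hg).simpleClosedAt hL, by simp, ?_, ?_⟩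
  · have := (List.range_prefix_of_le (Nat.le_of_dvd hL (Nat.dvd_lcm_left _ _))).map f
    rw [hfa] at this
    rwa [List.map_map]
  · have := (List.range_prefix_of_le (Nat.le_of_dvd hL (Nat.dvd_lcm_right _ _))).map g
    rw [hgb] at this
    rwa [List.map_map]

theorem ConditionK.kron (hK : Q.ConditionK) (Q' : Quiv) : (Q.kron Q').ConditionK := by
  rintro ⟨v, w⟩ l hl
  obtain ⟨c₁, -, hc₁⟩ := hl.isClosedWalkAt.map_fst.exists_simpleClosedAt_prefix
  obtain ⟨c₂, -, hc₂⟩ := hl.isClosedWalkAt.map_snd.exists_simpleClosedAt_prefix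
  obtain ⟨a, hac, ha⟩ := hK v c₁ hc₁
  obtain ⟨p, hp, -, hap, -⟩ := ha.exists_kron hc₂
  obtain ⟨p₁, hp₁, -, hcp₁, -⟩ := hc₁.exists_kron hc₂
  -- `p` and `p₁` are distinct simple closed paths at `(v, w)`, so one of them is not `l`.
  have hpp₁ : p ≠ p₁ := fun h => hac (ha.eq_of_prefix_of_prefix hc₁ hap (h ▸ hcp₁))
  by_cases hpl : p = l
  · exact ⟨p₁, hpl ▸ hpp₁.symm, hp₁⟩
  · exact ⟨p, hpl, hp⟩

theorem ConditionK.of_kron_self (hK : (Q.kron Q).ConditionK) : Q.ConditionK := by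
  intro v l hl
  obtain ⟨p, hp, hlen, hp₁, hp₂⟩ := hl.exists_kron hl
  obtain ⟨l', hl'p, hl'⟩ := hK (v, v) p hp
  obtain ⟨c₁, hc₁l', hc₁⟩ := hl'.isClosedWalkAt.map_fst.exists_simpleClosedAt_prefix
  obtain ⟨c₂, hc₂l', hc₂⟩ := hl'.isClosedWalkAt.map_snd.exists_simpleClosedAt_prefix
  by_cases h₁ : c₁ = l
  · by_cases h₂ : c₂ = l
    · rw [Nat.lcm_self] at hlen
      have hp_fst : p.map Prod.fst = l := (hp₁.eq_of_length (by simp [hlen])).symm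
      have hp_snd : p.map Prod.snd = l := (hp₂.eq_of_length (by simp [hlen])).symm
      have hpl' : p <+: l' := List.prefix_of_map_fst_of_map_snd
        (hp_fst ▸ h₁ ▸ hc₁l') (hp_snd ▸ h₂ ▸ hc₂l')
      exact absurd (hp.eq_of_prefix hl' hpl') hl'p.symm
    · exact ⟨c₂, h₂, hc₂⟩
  · exact ⟨c₁, h₁, hc₁⟩

end Quiv

/-- A quiver satisfies Condition (K) iff its Kronecker square satisfies Condition (K). -/
theorem kron_conditionK_iff (Q : Quiv) :
    Q.ConditionK ↔ (Q.kron Q).ConditionK :=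
  ⟨fun hK => hK.kron Q, Quiv.ConditionK.of_kron_self⟩
end
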